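/- In the education signaling game specified in the context, the strategy profile π* in which both worker types choose D with probability 1 and the employer plays π₂*(low|N) = 1, π₂*(low|C) = 1, π₂*(med|D) = 1 is a rationality-compatible equilibrium (RCE) but is not a uniform rationality-compatible equilibrium (uRCE). -/

import Mathlib

open scoped Classical
open Finset Filter

noncomputable section

/-- `p` is a probability distribution on the finite type `X`. -/
def IsDist {X : Type*} [Fintype X] (p : X → ℝ) : Prop :=
  (∀ x, 0 ≤ p x) ∧ ∑ x, p x = 1

variable {Θ S A : Type*} [Fintype Θ] [Fintype S] [Fintype A]

/-- Sender's expected payoff `u₁(θ, s, π₂(·|s))` from signal `s` when the receiver plays `π₂`. -/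
def u1R (u₁ : Θ → S → A → ℝ) (π₂ : S → A → ℝ) (θ : Θ) (s : S) : ℝ :=
  ∑ a, π₂ s a * u₁ θ s a

/-- Receiver's expected payoff of action `a` after signal `s` under belief `p`. -/
def expU2 (u₂ : Θ → S → A → ℝ) (p : Θ → ℝ) (s : S) (a : A) : ℝ :=
  ∑ θ, p θ * u₂ θ s a

/-- `BR(p, s)`: pure best responses to belief `p` after signal `s`. -/
def BRb (u₂ : Θ → S → A → ℝ) (p : Θ → ℝ) (s : S) : Set A :=
  {a | ∀ a', expU2 u₂ p s a' ≤ expU2 u₂ p s a}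

/-- `A_s^BR`: actions that best respond to some belief after `s`. -/
def ABR (u₂ : Θ → S → A → ℝ) (s : S) : Set A :=
  {a | ∃ p, IsDist p ∧ a ∈ BRb u₂ p s}

/-- Membership in `Π₂•`: a receiver behavior strategy supported on `A_s^BR` after every `s`. -/
def Rational2 (u₂ : Θ → S → A → ℝ) (π₂ : S → A → ℝ) : Prop :=
  (∀ s, IsDist (π₂ s)) ∧ ∀ s a, π₂ s a ≠ 0 → a ∈ ABR u₂ s

/-- `u₁(θ,s,π₂(·|s)) ≥ max_{s' ≠ s} u₁(θ,s',π₂(·|s'))`. -/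
def WeakBest (u₁ : Θ → S → A → ℝ) (π₂ : S → A → ℝ) (θ : Θ) (s : S) : Prop :=
  ∀ s', s' ≠ s → u1R u₁ π₂ θ s' ≤ u1R u₁ π₂ θ s

/-- `u₁(θ,s,π₂(·|s)) > max_{s' ≠ s} u₁(θ,s',π₂(·|s'))`. -/
def StrictBest (u₁ : Θ → S → A → ℝ) (π₂ : S → A → ℝ) (θ : Θ) (s : S) : Prop :=
  ∀ s', s' ≠ s → u1R u₁ π₂ θ s' < u1R u₁ π₂ θ s

/-- `θ' ≿_s θ''`: `s` is more rationally-compatible with `θ'` than with `θ''`. -/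
def MoreCompat (u₁ u₂ : Θ → S → A → ℝ) (s : S) (θ' θ'' : Θ) : Prop :=
  ∀ π₂, Rational2 u₂ π₂ → WeakBest u₁ π₂ θ'' s → StrictBest u₁ π₂ θ' s

/-- `s` maximizes `s' ↦ u₁(θ, s', π₂(·|s'))`. -/
def GlobalBest (u₁ : Θ → S → A → ℝ) (π₂ : S → A → ℝ) (θ : Θ) (s : S) : Prop :=
  ∀ s', u1R u₁ π₂ θ s' ≤ u1R u₁ π₂ θ s

/-- `S_θ`: signals that best respond to some (not necessarily rational) receiver strategy. -/
def Sθ (u₁ : Θ → S → A → ℝ) (θ : Θ) : Set S :=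
  {s | ∃ π₂ : S → A → ℝ, (∀ s', IsDist (π₂ s')) ∧ GlobalBest u₁ π₂ θ s}

/-- `Θ_s`: types for which `s` is not dominated. -/
def Θtypes (u₁ : Θ → S → A → ℝ) (s : S) : Set Θ := {θ | s ∈ Sθ u₁ θ}

/-- Membership in `Π₁•`. -/
def Rational1 (u₁ : Θ → S → A → ℝ) (π₁ : Θ → S → ℝ) : Prop :=
  (∀ θ, IsDist (π₁ θ)) ∧ ∀ θ s, π₁ θ s ≠ 0 → s ∈ Sθ u₁ θ

/-- Nash equilibrium of the signaling game. -/
def NashEq (lam : Θ → ℝ) (u₁ u₂ : Θ → S → A → ℝ)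
    (π₁ : Θ → S → ℝ) (π₂ : S → A → ℝ) : Prop :=
  (∀ θ, IsDist (π₁ θ)) ∧ (∀ s, IsDist (π₂ s)) ∧
  (∀ θ s, π₁ θ s ≠ 0 → GlobalBest u₁ π₂ θ s) ∧
  (∀ s, (∃ θ, π₁ θ s ≠ 0) → ∀ a, π₂ s a ≠ 0 →
    ∀ a', ∑ θ, lam θ * π₁ θ s * u₂ θ s a' ≤ ∑ θ, lam θ * π₁ θ s * u₂ θ s a)

/-- Equilibrium expected payoff `E_π[u₁ | θ]`. -/
def eqPayoff (u₁ : Θ → S → A → ℝ) (π₁ : Θ → S → ℝ) (π₂ : S → A → ℝ) (θ : Θ) : ℝ :=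
  ∑ s, π₁ θ s * u1R u₁ π₂ θ s

/-- `s` is off the path of play of `π₁`. -/
def OffPath (π₁ : Θ → S → ℝ) (s : S) : Prop := ∀ θ, π₁ θ s = 0

/-- `J̃(s, π)`: types for which some best response to `s` weakly improves on the equilibrium. -/
def Jt (u₁ u₂ : Θ → S → A → ℝ) (π₁ : Θ → S → ℝ) (π₂ : S → A → ℝ) (s : S) : Set Θ :=
  {θ | ∃ a ∈ ABR u₂ s, eqPayoff u₁ π₁ π₂ θ ≤ u₁ θ s a}

/-- The odds-ratio condition defining `P_{θ'▷θ''}`. -/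
def OddsLe (lam : Θ → ℝ) (θ' θ'' : Θ) (p : Θ → ℝ) : Prop :=
  p θ'' * lam θ' ≤ lam θ'' * p θ'

/-- `Δ(T)`: beliefs supported on `T`. -/
def DeltaOn {Θ : Type*} [Fintype Θ] (T : Set Θ) : Set (Θ → ℝ) :=
  {p | IsDist p ∧ ∀ θ ∉ T, p θ = 0}

/-- `P̃(s, π)`: rationality-compatible beliefs at profile `π`. -/
def Pt (lam : Θ → ℝ) (u₁ u₂ : Θ → S → A → ℝ) (π₁ : Θ → S → ℝ) (π₂ : S → A → ℝ)
    (s : S) : Set (Θ → ℝ) :=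
  if (Jt u₁ u₂ π₁ π₂ s).Nonempty then
    DeltaOn (Jt u₁ u₂ π₁ π₂ s) ∩
      {p | ∀ θ' θ'', MoreCompat u₁ u₂ s θ' θ'' → OddsLe lam θ' θ'' p}
  else DeltaOn (Θtypes u₁ s)

/-- Rationality-compatible equilibrium. -/
def RCE (lam : Θ → ℝ) (u₁ u₂ : Θ → S → A → ℝ)
    (π₁ : Θ → S → ℝ) (π₂ : S → A → ℝ) : Prop :=
  NashEq lam u₁ u₂ π₁ π₂ ∧
  ∀ s a, π₂ s a ≠ 0 → ∃ p ∈ Pt lam u₁ u₂ π₁ π₂ s, a ∈ BRb u₂ p s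

/-- `P̂(s)`: uniformly rationality-compatible beliefs. -/
def Ph (lam : Θ → ℝ) (u₁ u₂ : Θ → S → A → ℝ) (s : S) : Set (Θ → ℝ) :=
  DeltaOn (Θtypes u₁ s) ∩
    {p | ∀ θ' θ'', MoreCompat u₁ u₂ s θ' θ'' → OddsLe lam θ' θ'' p}

/-- Uniform rationality-compatible equilibrium. -/
def URCE (lam : Θ → ℝ) (u₁ u₂ : Θ → S → A → ℝ)
    (π₁ : Θ → S → ℝ) (π₂ : S → A → ℝ) : Prop :=
  NashEq lam u₁ u₂ π₁ π₂ ∧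
  ∀ θ s, OffPath π₁ s → ∀ a, (∃ p ∈ Ph lam u₁ u₂ s, a ∈ BRb u₂ p s) →
    u₁ θ s a ≤ eqPayoff u₁ π₁ π₂ θ

/-- Receiver's expected payoff of a mixed action `α` after `s` under belief `p`. -/
def expU2m (u₂ : Θ → S → A → ℝ) (p : Θ → ℝ) (s : S) (α : A → ℝ) : ℝ :=
  ∑ θ, p θ * ∑ a, α a * u₂ θ s a

/-- `MBR(p, s)`: mixed best responses to belief `p` after `s`. -/
def MBRb (u₂ : Θ → S → A → ℝ) (p : Θ → ℝ) (s : S) : Set (A → ℝ) :=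
  {α | IsDist α ∧ ∀ α', IsDist α' → expU2m u₂ p s α' ≤ expU2m u₂ p s α}

/-- `MBR(s)`. -/
def MBR (u₂ : Θ → S → A → ℝ) (s : S) : Set (A → ℝ) :=
  {α | ∃ p, IsDist p ∧ α ∈ MBRb u₂ p s}

/-- `u₁(θ, s, α)` for a mixed action `α`. -/
def u1m (u₁ : Θ → S → A → ℝ) (θ : Θ) (s : S) (α : A → ℝ) : ℝ :=
  ∑ a, α a * u₁ θ s a

/-- `D(θ, s; π)`. -/
def Dset (u₁ u₂ : Θ → S → A → ℝ) (π₁ : Θ → S → ℝ) (π₂ : S → A → ℝ)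
    (θ : Θ) (s : S) : Set (A → ℝ) :=
  {α | α ∈ MBR u₂ s ∧ eqPayoff u₁ π₁ π₂ θ < u1m u₁ θ s α}

/-- `D°(θ, s; π)`. -/
def D0set (u₁ u₂ : Θ → S → A → ℝ) (π₁ : Θ → S → ℝ) (π₂ : S → A → ℝ)
    (θ : Θ) (s : S) : Set (A → ℝ) :=
  {α | α ∈ MBR u₂ s ∧ eqPayoff u₁ π₁ π₂ θ = u1m u₁ θ s α}

/-! ### The education signaling game -/

/-- Worker types. -/
inductive Ty | H | L
deriving DecidableEq

instance : Fintype Ty := ⟨{Ty.H, Ty.L}, fun x => by cases x <;> simp⟩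

/-- Education levels (signals): None, College, Ph.D. -/
inductive Sg | N | C | D
deriving DecidableEq

instance : Fintype Sg := ⟨{Sg.N, Sg.C, Sg.D}, fun x => by cases x <;> simp⟩

/-- Wages (receiver actions). -/
inductive Ac | low | med | high
deriving DecidableEq

instance : Fintype Ac := ⟨{Ac.low, Ac.med, Ac.high}, fun x => by cases x <;> simp⟩

/-- Type distribution: both types equally likely. -/
def lamE : Ty → ℝ := fun _ => 1 / 2

/-- Wage utility. -/
def z : Ac → ℝ
  | .low => 0
  | .med => 6
  | .high => 9

/-- Consumption value of (ability, education). -/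
def v : Ty → Sg → ℝ
  | .H, .N => 0
  | .L, .N => 0
  | .H, .C => 2
  | .L, .C => 1
  | .H, .D => -2
  | .L, .D => -4

/-- Worker (sender) payoffs. -/
def u1E (θ : Ty) (s : Sg) (a : Ac) : ℝ := z a + v θ s

/-- Employer (receiver) payoffs. -/
def u2E : Ty → Sg → Ac → ℝ
  | .H, .N, .low => -2
  | .H, .N, .med => 0
  | .H, .N, .high => 1
  | .L, .N, .low => 1
  | .L, .N, .med => 0
  | .L, .N, .high => -2
  | .H, .C, .low => -1
  | .H, .C, .med => 1
  | .H, .C, .high => 2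
  | .L, .C, .low => 2
  | .L, .C, .med => 1
  | .L, .C, .high => -1
  | .H, .D, .low => 0
  | .H, .D, .med => 2
  | .H, .D, .high => 3
  | .L, .D, .low => 3
  | .L, .D, .med => 2
  | .L, .D, .high => 0

/-- The employer strategy: low wage after N and C, medium wage after D. -/
def pi2D : Sg → Ac → ℝ
  | .N, .low => 1
  | .C, .low => 1
  | .D, .med => 1
  | _, _ => 0

/-!
Both types pool on `D` and earn 4 (`H`) and 2 (`L`); no deviation pays against low wages after
`N` and `C`. Every wage is a best response to some belief, so all receiver strategies are
rational. Low wages after `N` and `C` are justified by the point belief on `L`: it is admissible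
because `H` is not more rationally compatible with `N` or `C` than `L` (explicit mixed wage
schedules make `L` weakly prefer the signal while `H` does not strictly prefer it), and the
prior, which justifies the medium wage after `D`, satisfies every odds-ratio constraint. The
uniform criterion fails at `C`: as `C` is undominated for both types, the prior lies in `P̂(C)`,
the medium wage best responds to it, and `H` would earn 8 > 4 there.
-/

theorem isDist_single {X : Type*} [Fintype X] [DecidableEq X] (x : X) :
    IsDist (Pi.single x (1 : ℝ)) :=
  ⟨fun y => by by_cases h : y = x <;> simp [h], by simp⟩

theorem single_mem_deltaOn {Θ : Type*} [Fintype Θ] [DecidableEq Θ] {T : Set Θ} {θ : Θ}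
    (h : θ ∈ T) : Pi.single θ 1 ∈ DeltaOn T :=
  ⟨isDist_single θ, fun _ hθ' => Pi.single_eq_of_ne (ne_of_mem_of_not_mem h hθ').symm _⟩

theorem mem_deltaOn_of_forall_mem {Θ : Type*} [Fintype Θ] {T : Set Θ} {p : Θ → ℝ}
    (hp : IsDist p) (hT : ∀ θ, θ ∈ T) : p ∈ DeltaOn T :=
  ⟨hp, fun θ hθ => absurd (hT θ) hθ⟩

theorem oddsLe_refl {Θ : Type*} (lam : Θ → ℝ) (θ : Θ) (p : Θ → ℝ) : OddsLe lam θ θ p :=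
  (mul_comm (p θ) (lam θ)).le

theorem oddsLe_self {Θ : Type*} (lam : Θ → ℝ) (θ' θ'' : Θ) : OddsLe lam θ' θ'' lam :=
  le_rfl

theorem expU2_single {Θ S A : Type*} [Fintype Θ] [DecidableEq Θ] (u₂ : Θ → S → A → ℝ)
    (θ : Θ) (s : S) (a : A) : expU2 u₂ (Pi.single θ 1) s a = u₂ θ s a := by
  simp [expU2, Pi.single_apply]

theorem mem_BRb_single_iff {Θ S A : Type*} [Fintype Θ] [DecidableEq Θ] {u₂ : Θ → S → A → ℝ}
    {θ : Θ} {s : S} {a : A} : a ∈ BRb u₂ (Pi.single θ 1) s ↔ ∀ a', u₂ θ s a' ≤ u₂ θ s a := by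
  simp only [BRb, Set.mem_ofPred_eq, expU2_single]

theorem u1R_single {Θ S A : Type*} [Fintype A] [DecidableEq A] (u₁ : Θ → S → A → ℝ)
    (f : S → A) (θ : Θ) (s : S) : u1R u₁ (fun s => Pi.single (f s) 1) θ s = u₁ θ s (f s) := by
  simp [u1R, Pi.single_apply]

theorem not_moreCompat_of_witness {Θ S A : Type*} [Fintype Θ] [Fintype A]
    {u₁ u₂ : Θ → S → A → ℝ} {π₂ : S → A → ℝ} {s s' : S} {θ' θ'' : Θ}
    (hπ₂ : Rational2 u₂ π₂) (hweak : WeakBest u₁ π₂ θ'' s) (hs' : s' ≠ s)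
    (hle : u1R u₁ π₂ θ' s ≤ u1R u₁ π₂ θ' s') : ¬ MoreCompat u₁ u₂ s θ' θ'' :=
  fun h => (h π₂ hπ₂ hweak s' hs').not_ge hle

theorem self_mem_Ph {Θ S A : Type*} [Fintype Θ] [Fintype A] {lam : Θ → ℝ}
    {u₁ u₂ : Θ → S → A → ℝ} {s : S} (hlam : IsDist lam) (hΘ : ∀ θ, θ ∈ Θtypes u₁ s) :
    lam ∈ Ph lam u₁ u₂ s :=
  ⟨mem_deltaOn_of_forall_mem hlam hΘ, fun θ' θ'' _ => oddsLe_self lam θ' θ''⟩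

section Beliefs

variable {lam : Θ → ℝ} {u₁ u₂ : Θ → S → A → ℝ} {π₁ : Θ → S → ℝ} {π₂ : S → A → ℝ} {s : S}

theorem single_mem_Pt [DecidableEq Θ] (hlam : ∀ θ, 0 ≤ lam θ) {θ : Θ}
    (hJ : θ ∈ Jt u₁ u₂ π₁ π₂ s) (hmc : ∀ θ', MoreCompat u₁ u₂ s θ' θ → θ' = θ) :
    Pi.single θ 1 ∈ Pt lam u₁ u₂ π₁ π₂ s := by
  rw [Pt, if_pos ⟨θ, hJ⟩]
  refine ⟨single_mem_deltaOn hJ, fun θ' θ'' h => ?_⟩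
  by_cases hθ'' : θ'' = θ
  · subst hθ''
    rw [hmc θ' h]
    exact oddsLe_refl _ _ _
  · simp only [OddsLe, Pi.single_eq_of_ne hθ'', zero_mul]
    exact mul_nonneg (hlam θ'') ((isDist_single θ).1 θ')

theorem self_mem_Pt (hlam : IsDist lam) (hJ : ∀ θ, θ ∈ Jt u₁ u₂ π₁ π₂ s) :
    lam ∈ Pt lam u₁ u₂ π₁ π₂ s := by
  obtain ⟨θ, -, -⟩ := exists_ne_zero_of_sum_ne_zero (hlam.2 ▸ one_ne_zero)
  rw [Pt, if_pos ⟨θ, hJ θ⟩]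
  exact ⟨mem_deltaOn_of_forall_mem hlam hJ, fun θ' θ'' _ => oddsLe_self lam θ' θ''⟩

end Beliefs

def pooling {Θ S : Type*} [DecidableEq S] (s₀ : S) : Θ → S → ℝ :=
  fun _ s => if s = s₀ then 1 else 0

theorem offPath_pooling {Θ S : Type*} [DecidableEq S] {s s₀ : S} (h : s ≠ s₀) :
    OffPath (pooling (Θ := Θ) s₀) s :=
  fun _ => if_neg h

theorem eqPayoff_pooling {Θ S A : Type*} [Fintype S] [Fintype A] [DecidableEq S]
    (u₁ : Θ → S → A → ℝ) (s₀ : S) (π₂ : S → A → ℝ) (θ : Θ) :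
    eqPayoff u₁ (pooling s₀) π₂ θ = u1R u₁ π₂ θ s₀ := by
  simp [eqPayoff, pooling]

theorem nashEq_pooling [DecidableEq S] {lam : Θ → ℝ} {u₁ u₂ : Θ → S → A → ℝ}
    {π₂ : S → A → ℝ} {s₀ : S} (hπ₂ : ∀ s, IsDist (π₂ s)) (hbest : ∀ θ, GlobalBest u₁ π₂ θ s₀)
    (hBR : ∀ a, π₂ s₀ a ≠ 0 → a ∈ BRb u₂ lam s₀) : NashEq lam u₁ u₂ (pooling s₀) π₂ := by
  refine ⟨fun θ => ?_, hπ₂, fun θ s hs => ?_, fun s ⟨θ, hs⟩ a ha a' => ?_⟩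
  · convert isDist_single s₀ using 1
    ext s
    simp [pooling, Pi.single_apply]
  all_goals obtain rfl : s = s₀ := by by_contra h; exact hs (if_neg h)
  · exact hbest θ
  · simpa [pooling, expU2] using hBR a ha a'

theorem Ty.sum_univ {M : Type*} [AddCommMonoid M] (f : Ty → M) : ∑ θ, f θ = f .H + f .L := by
  rw [show (univ : Finset Ty) = {.H, .L} from rfl]
  simp

theorem Ac.sum_univ {M : Type*} [AddCommMonoid M] (f : Ac → M) :
    ∑ a, f a = f .low + f .med + f .high := by
  rw [show (univ : Finset Ac) = {.low, .med, .high} from rfl]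
  simp [add_assoc]

theorem isDist_lamE : IsDist lamE :=
  ⟨fun _ => by norm_num [lamE], by rw [Ty.sum_univ]; norm_num [lamE]⟩

theorem low_mem_BRb_single_L (s : Sg) : Ac.low ∈ BRb u2E (Pi.single Ty.L 1) s :=
  mem_BRb_single_iff.2 fun a' => by cases s <;> cases a' <;> norm_num [u2E]

theorem med_mem_BRb_lamE (s : Sg) : Ac.med ∈ BRb u2E lamE s :=
  fun a' => by cases s <;> cases a' <;> norm_num [expU2, Ty.sum_univ, lamE, u2E]

theorem high_mem_BRb_single_H (s : Sg) : Ac.high ∈ BRb u2E (Pi.single Ty.H 1) s :=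
  mem_BRb_single_iff.2 fun a' => by cases s <;> cases a' <;> norm_num [u2E]

theorem mem_ABR_u2E (s : Sg) (a : Ac) : a ∈ ABR u2E s := by
  cases a
  exacts [⟨_, isDist_single _, low_mem_BRb_single_L s⟩, ⟨_, isDist_lamE, med_mem_BRb_lamE s⟩,
    ⟨_, isDist_single _, high_mem_BRb_single_H s⟩]

theorem rational2_u2E {π₂ : Sg → Ac → ℝ} (h : ∀ s, IsDist (π₂ s)) : Rational2 u2E π₂ :=
  ⟨h, fun s a _ => mem_ABR_u2E s a⟩

theorem isDist_pi2D (s : Sg) : IsDist (pi2D s) :=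
  ⟨fun a => by cases s <;> cases a <;> norm_num [pi2D],
    by cases s <;> norm_num [Ac.sum_univ, pi2D]⟩

theorem nashEq_pooling_D : NashEq lamE u1E u2E (pooling Sg.D) pi2D := by
  refine nashEq_pooling isDist_pi2D (fun θ s => ?_) fun a ha => ?_
  · cases θ <;> cases s <;> norm_num [u1R, Ac.sum_univ, pi2D, u1E, z, v]
  · obtain rfl : a = Ac.med := by cases a <;> simp_all [pi2D]
    exact med_mem_BRb_lamE _

theorem mem_Jt_pooling_D (θ : Ty) (s : Sg) : θ ∈ Jt u1E u2E (pooling Sg.D) pi2D s := by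
  refine ⟨Ac.high, mem_ABR_u2E s _, ?_⟩
  rw [eqPayoff_pooling]
  cases θ <;> cases s <;> norm_num [u1R, Ac.sum_univ, pi2D, u1E, z, v]

/-- Against this strategy `L` gets 9 from `N` and 8 from `C`, while `H` gets 9 from both. -/
def witnessN : Sg → Ac → ℝ
  | .N, .high => 1
  | .C, .med => 2 / 3
  | .C, .high => 1 / 3
  | .D, .low => 1
  | _, _ => 0

theorem isDist_witnessN (s : Sg) : IsDist (witnessN s) :=
  ⟨fun a => by cases s <;> cases a <;> norm_num [witnessN],
    by cases s <;> norm_num [Ac.sum_univ, witnessN]⟩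

theorem not_moreCompat_N : ¬ MoreCompat u1E u2E Sg.N Ty.H Ty.L := by
  refine not_moreCompat_of_witness (s' := Sg.C) (rational2_u2E isDist_witnessN)
    (fun s' _ => ?_) (by decide) ?_
  · cases s' <;> norm_num [u1R, Ac.sum_univ, witnessN, u1E, z, v]
  · norm_num [u1R, Ac.sum_univ, witnessN, u1E, z, v]

/-- Against this strategy `L` gets 1 from both `C` and `D`, while `H` gets 2 from `C` and 3
from `D`. -/
def witnessC : Sg → Ac → ℝ
  | .N, .low => 1
  | .C, .low => 1
  | .D, .low => 1 / 6
  | .D, .med => 5 / 6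
  | _, _ => 0

theorem isDist_witnessC (s : Sg) : IsDist (witnessC s) :=
  ⟨fun a => by cases s <;> cases a <;> norm_num [witnessC],
    by cases s <;> norm_num [Ac.sum_univ, witnessC]⟩

theorem not_moreCompat_C : ¬ MoreCompat u1E u2E Sg.C Ty.H Ty.L := by
  refine not_moreCompat_of_witness (s' := Sg.D) (rational2_u2E isDist_witnessC)
    (fun s' _ => ?_) (by decide) ?_
  · cases s' <;> norm_num [u1R, Ac.sum_univ, witnessC, u1E, z, v]
  · norm_num [u1R, Ac.sum_univ, witnessC, u1E, z, v]

theorem eq_L_of_moreCompat_L {s : Sg} (hs : s ≠ Sg.D) {θ : Ty}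
    (h : MoreCompat u1E u2E s θ Ty.L) : θ = Ty.L := by
  cases θ
  · cases s
    exacts [absurd h not_moreCompat_N, absurd h not_moreCompat_C, absurd rfl hs]
  · rfl

theorem exists_mem_Pt_of_pi2D_ne_zero {s : Sg} {a : Ac} (ha : pi2D s a ≠ 0) :
    ∃ p ∈ Pt lamE u1E u2E (pooling Sg.D) pi2D s, a ∈ BRb u2E p s := by
  cases s <;> cases a <;> simp [pi2D] at ha
  case N.low | C.low =>
    exact ⟨_, single_mem_Pt isDist_lamE.1 (mem_Jt_pooling_D _ _)
      (fun _ => eq_L_of_moreCompat_L (by decide)), low_mem_BRb_single_L _⟩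
  case D.med =>
    exact ⟨lamE, self_mem_Pt isDist_lamE (mem_Jt_pooling_D · _), med_mem_BRb_lamE _⟩

theorem mem_Θtypes_C (θ : Ty) : θ ∈ Θtypes u1E Sg.C := by
  refine ⟨fun s => Pi.single (if s = Sg.C then Ac.high else Ac.low) 1,
    fun _ => isDist_single _, fun s' => ?_⟩
  rw [u1R_single, u1R_single]
  cases θ <;> cases s' <;> simp [u1E, z, v] <;> norm_num

/-- in the education game, the profile where both worker types choose D,
and the employer pays low after N and C and medium after D, is an RCE but not a uRCE. -/
theorem education_pooling_on_D_is_RCE_not_uRCE :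
    RCE lamE u1E u2E (fun _ s => if s = Sg.D then 1 else 0) pi2D ∧
    ¬ URCE lamE u1E u2E (fun _ s => if s = Sg.D then 1 else 0) pi2D := by
  change RCE lamE u1E u2E (pooling Sg.D) pi2D ∧ ¬ URCE lamE u1E u2E (pooling Sg.D) pi2D
  refine ⟨⟨nashEq_pooling_D, fun _ _ => exists_mem_Pt_of_pi2D_ne_zero⟩, fun h => ?_⟩
  have hdev := h.2 Ty.H Sg.C (offPath_pooling (by decide)) Ac.med
    ⟨lamE, self_mem_Ph isDist_lamE mem_Θtypes_C, med_mem_BRb_lamE _⟩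
  rw [eqPayoff_pooling] at hdev
  norm_num [u1R, Ac.sum_univ, pi2D, u1E, z, v] at hdev

end
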